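/- Let d ≥ 1 and suppose a SIC system exists on ℂ^d. Then the minimum cardinality of a finite index set I admitting positive reals p_i and unit vectors u_i ∈ ℂ^d (i ∈ I) with Σ_{i∈I} p_i·|u_i ⊗ ū_i⟩⟨u_i ⊗ ū_i| = T_inv is exactly d². -/

import Mathlib

open scoped BigOperators ComplexInnerProductSpace
open Matrix MeasureTheory

noncomputable section

/-- `ℂ^d` with the standard Hermitian inner product. -/
abbrev V (d : ℕ) : Type := EuclideanSpace ℂ (Fin d)

/-- `ℂ^d ⊗ ℂ^d`, identified with functions on `Fin d × Fin d`. -/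
abbrev V2 (d : ℕ) : Type := EuclideanSpace ℂ (Fin d × Fin d)

/-- operators on `ℂ^d ⊗ ℂ^d`, as matrices. -/
abbrev Op2 (d : ℕ) : Type := Matrix (Fin d × Fin d) (Fin d × Fin d) ℂ

/-- tensor (Kronecker) product of vectors. -/
def tens {d : ℕ} (u v : V d) : V2 d := WithLp.toLp 2 (fun p : Fin d × Fin d => u p.1 * v p.2)

/-- entrywise complex conjugate `ū` of a vector. -/
def cvec {d : ℕ} (u : V d) : V d := WithLp.toLp 2 (fun k => starRingEnd ℂ (u k))

/-- the maximally entangled state `φ⁰ = (1/√d) Σ_k e_k ⊗ e_k`. -/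
def phi0 (d : ℕ) : V2 d := WithLp.toLp 2 (fun p : Fin d × Fin d => if p.1 = p.2 then ((Real.sqrt d : ℂ))⁻¹ else 0)

/-- the rank-one operator `|w⟩⟨w|`. -/
def outer {d : ℕ} (w : V2 d) : Op2 d := Matrix.of fun p q => w p * starRingEnd ℂ (w q)

/-- `T_inv = |φ⁰⟩⟨φ⁰| + (1/(d+1))(I - |φ⁰⟩⟨φ⁰|)`. -/
def Tinv (d : ℕ) : Op2 d := outer (phi0 d) + (1 / ((d : ℂ) + 1)) • (1 - outer (phi0 d))

/-- A SIC system on `ℂ^d`: `d²` unit vectors with `|⟨u_i, u_j⟩|² = 1/(d+1)` for `i ≠ j`. -/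
def IsSIC {d : ℕ} (u : Fin (d ^ 2) → V d) : Prop :=
  (∀ i, ‖u i‖ = 1) ∧ ∀ i j, i ≠ j → ‖⟪u i, u j⟫‖ ^ 2 = 1 / (d + 1)

/-!
The lower bound is a rank count: `T_inv = Φ + (d+1)⁻¹(1 - Φ)` with `Φ = |φ⁰⟩⟨φ⁰|` idempotent is
invertible, while a sum of `|I|` rank-one operators has rank at most `|I|`; hence `|I| ≥ d²`.

For a SIC `(u_i)`, put `P_i = |u_i ⊗ ū_i⟩⟨u_i ⊗ ū_i|` and `S = d⁻¹ Σ P_i`. Since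
`|⟨u_i ⊗ ū_i, u_j ⊗ ū_j⟩| = |⟨u_i, u_j⟩|²` and `|⟨φ⁰, u ⊗ ū⟩|² = 1/d`, one finds
`tr(P_i S) = tr(P_i T_inv) = 2/(d+1)` for every `i`, and `tr(T_inv²) = 2d/(d+1)`. So the Hermitian
matrices `S` and `T_inv` satisfy `tr(S²) = tr(S T_inv) = tr(T_inv²)`, i.e. `tr((S - T_inv)²) = 0`.
-/

namespace Matrix

variable {m n ι R : Type*} [Fintype ι]

theorem sum_vecMulVec_eq_mul [NonUnitalNonAssocSemiring R] (v : ι → m → R) (w : ι → n → R) :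
    ∑ i, vecMulVec (v i) (w i) = (of fun p i => v i p) * of w := by
  ext p q
  simp [mul_apply, vecMulVec_apply, sum_apply]

theorem card_le_of_isUnit_sum_vecMulVec [Fintype n] [DecidableEq n] [CommSemiring R]
    [StrongRankCondition R] (v w : ι → n → R) (h : IsUnit (∑ i, vecMulVec (v i) (w i))) :
    Fintype.card n ≤ Fintype.card ι := by
  rw [← rank_of_isUnit _ h, sum_vecMulVec_eq_mul]
  exact (rank_mul_le_left _ _).trans (rank_le_card_width _)

theorem IsHermitian.eq_of_trace_mul_eq [Fintype n] [CommRing R] [PartialOrder R] [StarRing R]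
    [StarOrderedRing R] [NoZeroDivisors R] {X Y : Matrix n n R}
    (hX : X.IsHermitian) (hY : Y.IsHermitian)
    (hXX : trace (X * X) = trace (X * Y)) (hYY : trace (Y * Y) = trace (X * Y)) : X = Y := by
  have h : trace ((X - Y) * (X - Y)ᴴ) = 0 := by
    rw [(hX.sub hY).eq, sub_mul, mul_sub, mul_sub, trace_sub, trace_sub, trace_sub,
      trace_mul_comm Y X, hXX, hYY]
    ring
  exact sub_eq_zero.mp (trace_mul_conjTranspose_self_eq_zero_iff.mp h)

end Matrix

namespace IsIdempotentElem

variable {K A : Type*} [Ring A] {e : A}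

theorem add_smul_one_sub_mul [CommSemiring K] [Algebra K A] (he : IsIdempotentElem e) (a b : K) :
    (e + a • (1 - e)) * (e + b • (1 - e)) = e + (a * b) • (1 - e) := by
  have h₁ : e * (1 - e) = 0 := by rw [mul_sub, mul_one, he.eq, sub_self]
  have h₂ : (1 - e) * e = 0 := by rw [sub_mul, one_mul, he.eq, sub_self]
  simp only [add_mul, mul_add, smul_mul_assoc, mul_smul_comm, smul_smul, he.eq, he.one_sub.eq,
    h₁, h₂, smul_zero, add_zero, zero_add, mul_comm b a]

theorem isUnit_add_smul_one_sub [Field K] [Algebra K A] (he : IsIdempotentElem e) {a : K}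
    (ha : a ≠ 0) : IsUnit (e + a • (1 - e)) :=
  ⟨⟨_, e + a⁻¹ • (1 - e), by simp [he.add_smul_one_sub_mul, ha],
    by simp [he.add_smul_one_sub_mul, ha]⟩, rfl⟩

end IsIdempotentElem

variable {d : ℕ}

theorem outer_eq_vecMulVec (w : V2 d) : outer w = vecMulVec w.ofLp (star w.ofLp) := rfl

theorem isHermitian_outer (w : V2 d) : (outer w).IsHermitian := by
  rw [outer_eq_vecMulVec, IsHermitian, conjTranspose_vecMulVec, star_star]

theorem trace_outer (w : V2 d) : trace (outer w) = (‖w‖ : ℂ) ^ 2 := by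
  rw [outer_eq_vecMulVec, trace_vecMulVec, ← EuclideanSpace.inner_eq_star_dotProduct,
    inner_self_eq_norm_sq_to_K]
  rfl

theorem trace_outer_mul_outer (a b : V2 d) :
    trace (outer a * outer b) = (‖⟪a, b⟫‖ : ℂ) ^ 2 := by
  rw [outer_eq_vecMulVec, outer_eq_vecMulVec, vecMulVec_mul_vecMulVec, trace_vecMulVec,
    dotProduct_smul, smul_eq_mul, dotProduct_comm, ← EuclideanSpace.inner_eq_star_dotProduct,
    ← EuclideanSpace.inner_eq_star_dotProduct, ← inner_conj_symm b a, RCLike.mul_conj]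
  rfl

theorem isIdempotentElem_outer {w : V2 d} (hw : ‖w‖ = 1) : IsIdempotentElem (outer w) := by
  rw [IsIdempotentElem, outer_eq_vecMulVec, vecMulVec_mul_vecMulVec, dotProduct_comm,
    ← EuclideanSpace.inner_eq_star_dotProduct, inner_self_eq_norm_sq_to_K, hw]
  simp

theorem inner_tens (a b c e : V d) : ⟪tens a b, tens c e⟫ = ⟪a, c⟫ * ⟪b, e⟫ := by
  simp only [tens, EuclideanSpace.inner_eq_star_dotProduct, dotProduct, Fintype.sum_prod_type,
    Finset.sum_mul_sum, Pi.star_apply, star_mul']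
  exact Finset.sum_congr rfl fun _ _ => Finset.sum_congr rfl fun _ _ => by ring

theorem inner_cvec (a b : V d) : ⟪cvec a, cvec b⟫ = ⟪b, a⟫ := by
  simp [cvec, EuclideanSpace.inner_eq_star_dotProduct, dotProduct, mul_comm]

theorem norm_inner_tens_cvec (u v : V d) :
    ‖⟪tens u (cvec u), tens v (cvec v)⟫‖ = ‖⟪u, v⟫‖ ^ 2 := by
  rw [inner_tens, inner_cvec, norm_mul, norm_inner_symm, sq]

theorem norm_tens_cvec (u : V d) : ‖tens u (cvec u)‖ = ‖u‖ ^ 2 := by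
  have h := norm_inner_tens_cvec u u
  simp only [inner_self_eq_norm_sq_to_K, norm_pow, RCLike.norm_ofReal, abs_norm] at h
  exact (pow_left_inj₀ (norm_nonneg _) (by positivity) two_ne_zero).mp h

theorem inner_phi0_tens_cvec (u : V d) :
    ⟪phi0 d, tens u (cvec u)⟫ = (Real.sqrt d : ℂ)⁻¹ * ⟪u, u⟫ := by
  simp only [phi0, tens, cvec, EuclideanSpace.inner_eq_star_dotProduct, dotProduct,
    Fintype.sum_prod_type, Pi.star_apply, apply_ite star, star_zero, mul_ite, mul_zero,
    Finset.sum_ite_eq, Finset.mem_univ, if_true, Finset.mul_sum]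
  refine Finset.sum_congr rfl fun _ _ => ?_
  rw [star_inv₀, Complex.star_def, Complex.conj_ofReal, starRingEnd_apply]
  ring

theorem norm_phi0 (hd : d ≠ 0) : ‖phi0 d‖ = 1 := by
  have h : ⟪phi0 d, phi0 d⟫ = 1 := by
    simp only [phi0, EuclideanSpace.inner_eq_star_dotProduct, dotProduct, Fintype.sum_prod_type,
      Pi.star_apply, apply_ite star, star_zero, mul_ite, ite_mul, mul_zero, zero_mul,
      Finset.sum_ite_eq, Finset.mem_univ, if_true]
    rw [Finset.sum_const, Finset.card_univ, Fintype.card_fin, nsmul_eq_mul, star_inv₀,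
      Complex.star_def, Complex.conj_ofReal, ← mul_inv, ← Complex.ofReal_mul,
      Real.mul_self_sqrt (Nat.cast_nonneg _), Complex.ofReal_natCast]
    exact mul_inv_cancel₀ (Nat.cast_ne_zero.mpr hd)
  rw [inner_self_eq_norm_sq_to_K] at h
  change ((‖phi0 d‖ : ℝ) : ℂ) ^ 2 = 1 at h
  norm_cast at h
  exact (pow_eq_one_iff_of_nonneg (norm_nonneg _) two_ne_zero).mp h

theorem trace_outer_tens_cvec_mul_outer_phi0 {u : V d} (hu : ‖u‖ = 1) :
    trace (outer (tens u (cvec u)) * outer (phi0 d)) = (d : ℂ)⁻¹ := by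
  rw [trace_outer_mul_outer, norm_inner_symm, inner_phi0_tens_cvec, inner_self_eq_norm_sq_to_K,
    hu]
  simp only [RCLike.ofReal_one, one_pow, mul_one, norm_inv, Complex.norm_real, Real.norm_eq_abs,
    abs_of_nonneg (Real.sqrt_nonneg _), Complex.ofReal_inv, inv_pow, ← Complex.ofReal_pow,
    Real.sq_sqrt (Nat.cast_nonneg _), Complex.ofReal_natCast]

theorem isUnit_Tinv (hd : d ≠ 0) : IsUnit (Tinv d) :=
  (isIdempotentElem_outer (norm_phi0 hd)).isUnit_add_smul_one_sub
    (one_div_ne_zero (Nat.cast_add_one_ne_zero d))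

theorem isHermitian_Tinv : (Tinv d).IsHermitian :=
  (isHermitian_outer _).add ((isHermitian_one.sub (isHermitian_outer _)).smul
    (isSelfAdjoint_iff.mpr (by simp)))

theorem trace_Tinv_mul_Tinv (hd : d ≠ 0) : trace (Tinv d * Tinv d) = 2 * d / (d + 1) := by
  rw [Tinv, (isIdempotentElem_outer (norm_phi0 hd)).add_smul_one_sub_mul, trace_add, trace_smul,
    trace_sub, trace_one, trace_outer, norm_phi0 hd, Fintype.card_prod, Fintype.card_fin,
    smul_eq_mul]
  have := Nat.cast_add_one_ne_zero (R := ℂ) d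
  push_cast
  field_simp
  ring

theorem trace_outer_tens_cvec_mul_Tinv (hd : d ≠ 0) {u : V d} (hu : ‖u‖ = 1) :
    trace (outer (tens u (cvec u)) * Tinv d) = 2 / (d + 1) := by
  rw [Tinv, mul_add, mul_smul_comm, mul_sub, mul_one, trace_add, trace_smul, trace_sub,
    trace_outer, norm_tens_cvec, hu, trace_outer_tens_cvec_mul_outer_phi0 hu, smul_eq_mul]
  have : (d : ℂ) ≠ 0 := Nat.cast_ne_zero.mpr hd
  have := Nat.cast_add_one_ne_zero (R := ℂ) d
  push_cast
  field_simp
  ring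

theorem IsSIC.trace_outer_mul_sum {u : Fin (d ^ 2) → V d} (hsic : IsSIC u) (hd : d ≠ 0)
    (i : Fin (d ^ 2)) :
    trace (outer (tens (u i) (cvec (u i))) * ∑ j, (d : ℂ)⁻¹ • outer (tens (u j) (cvec (u j)))) =
      2 / (d + 1) := by
  obtain ⟨hnorm, hoff⟩ := hsic
  have hterm : ∀ j, trace (outer (tens (u i) (cvec (u i))) * outer (tens (u j) (cvec (u j)))) =
      ((d : ℂ) + 1)⁻¹ ^ 2 + if i = j then 1 - ((d : ℂ) + 1)⁻¹ ^ 2 else 0 := by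
    intro j
    rw [trace_outer_mul_outer, norm_inner_tens_cvec]
    split_ifs with h
    · rw [h, inner_self_eq_norm_sq_to_K, hnorm]
      simp
    · rw [hoff i j h]
      push_cast
      ring
  have : (d : ℂ) ≠ 0 := Nat.cast_ne_zero.mpr hd
  have := Nat.cast_add_one_ne_zero (R := ℂ) d
  rw [Finset.mul_sum, trace_sum]
  simp only [mul_smul_comm, trace_smul, hterm, smul_eq_mul]
  rw [← Finset.mul_sum, Finset.sum_add_distrib, Finset.sum_const, Finset.sum_ite_eq,
    if_pos (Finset.mem_univ _), Finset.card_univ, Fintype.card_fin, nsmul_eq_mul]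
  push_cast
  field_simp
  ring

open scoped ComplexOrder in
theorem IsSIC.sum_smul_outer_eq_Tinv {u : Fin (d ^ 2) → V d} (hsic : IsSIC u) (hd : d ≠ 0) :
    ∑ i, (d : ℂ)⁻¹ • outer (tens (u i) (cvec (u i))) = Tinv d := by
  set S := ∑ i, (d : ℂ)⁻¹ • outer (tens (u i) (cvec (u i)))
  have hS : S.IsHermitian := isHermitian_iff_isSelfAdjoint.mpr <| isSelfAdjoint_sum _ fun i _ =>
    ((isHermitian_outer _).smul (IsSelfAdjoint.natCast d).inv₀).isSelfAdjoint
  have hsum : ∑ _ : Fin (d ^ 2), (d : ℂ)⁻¹ * (2 / (d + 1)) = 2 * d / (d + 1) := by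
    have : (d : ℂ) ≠ 0 := Nat.cast_ne_zero.mpr hd
    rw [Finset.sum_const, Finset.card_univ, Fintype.card_fin, nsmul_eq_mul]
    push_cast
    field_simp
  have hSS : trace (S * S) = 2 * d / (d + 1) := by
    simp only [S, Finset.sum_mul, trace_sum, smul_mul_assoc, trace_smul, smul_eq_mul,
      hsic.trace_outer_mul_sum hd, hsum]
  have hST : trace (S * Tinv d) = 2 * d / (d + 1) := by
    simp only [S, Finset.sum_mul, trace_sum, smul_mul_assoc, trace_smul, smul_eq_mul,
      trace_outer_tens_cvec_mul_Tinv hd (hsic.1 _), hsum]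
  exact hS.eq_of_trace_mul_eq isHermitian_Tinv (hSS.trans hST.symm)
    ((trace_Tinv_mul_Tinv hd).trans hST.symm)

theorem card_le_of_sum_smul_outer_eq_Tinv (hd : d ≠ 0) {ι : Type*} [Fintype ι] (c : ι → ℂ)
    (w : ι → V2 d) (h : ∑ i, c i • outer (w i) = Tinv d) : d ^ 2 ≤ Fintype.card ι := by
  have hunit : IsUnit (∑ i, vecMulVec (w i).ofLp (c i • star (w i).ofLp)) := by
    simpa only [vecMulVec_smul, ← outer_eq_vecMulVec, h] using isUnit_Tinv hd
  simpa [sq] using card_le_of_isUnit_sum_vecMulVec _ _ hunit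

/-- If a SIC system exists on `ℂ^d`, the minimal number of outcomes of a POVM
realizing `T_inv` is exactly `d²`. -/
theorem stmt5 (d : ℕ) (hd : 1 ≤ d) (usic : Fin (d ^ 2) → V d) (hsic : IsSIC usic) :
    IsLeast {n : ℕ | ∃ (ι : Type) (_ : Fintype ι) (p : ι → ℝ) (u : ι → V d),
      Fintype.card ι = n ∧ (∀ i, 0 < p i) ∧ (∀ i, ‖u i‖ = 1) ∧
      ∑ i, (p i : ℂ) • outer (tens (u i) (cvec (u i))) = Tinv d} (d ^ 2) := by
  have hd₀ : d ≠ 0 := Nat.one_le_iff_ne_zero.mp hd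
  refine ⟨⟨Fin (d ^ 2), inferInstance, fun _ => (d : ℝ)⁻¹, usic, Fintype.card_fin _,
    fun _ => inv_pos.mpr (Nat.cast_pos.mpr hd), hsic.1, ?_⟩, ?_⟩
  · push_cast
    exact hsic.sum_smul_outer_eq_Tinv hd₀
  · rintro n ⟨ι, _, p, u, rfl, -, -, h⟩
    exact card_le_of_sum_smul_outer_eq_Tinv hd₀ _ _ h
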